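/- Let G be a finite simple connected graph of order n ≥ 3 with maximum degree Δ. If ψ(G) = Δ = n − 1, then G is isomorphic to K_n, K_{1,n−1}, or K_2 ∨ K̄_{n−2}. -/

import Mathlib

open SimpleGraph

/-- Vertices `u, v` are doubly resolved by vertices `x, y` if
`d(u,x) − d(v,x) ≠ d(u,y) − d(v,y)`. -/
def doublyResolves {V : Type*} (G : SimpleGraph V) (x y u v : V) : Prop :=
  (G.dist u x : ℤ) - (G.dist v x : ℤ) ≠ (G.dist u y : ℤ) - (G.dist v y : ℤ)

/-- A set `W` of vertices is a doubly resolving set for `G` if every two distinct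
vertices of `G` are doubly resolved by some two vertices of `W`. -/
def IsDoublyResolvingSet {V : Type*} (G : SimpleGraph V) (W : Set V) : Prop :=
  ∀ u v : V, u ≠ v → ∃ x ∈ W, ∃ y ∈ W, doublyResolves G x y u v

/-- The doubly resolving number `ψ(G)`: the minimum cardinality of a doubly
resolving set for `G`. -/
noncomputable def psi {V : Type*} (G : SimpleGraph V) : ℕ :=
  sInf {k | ∃ W : Finset V, W.card = k ∧ IsDoublyResolvingSet G ↑W}

/-- The join `G ∨ H` of two graphs on disjoint vertex sets: it contains the edges of
`G`, the edges of `H`, and all edges between vertices of `G` and vertices of `H`. -/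
def graphJoin {α β : Type*} (G : SimpleGraph α) (H : SimpleGraph β) :
    SimpleGraph (α ⊕ β) where
  Adj x y := match x, y with
    | .inl a, .inl b => G.Adj a b
    | .inr a, .inr b => H.Adj a b
    | .inl _, .inr _ => True
    | .inr _, .inl _ => True
  symm := ⟨by
    rintro (a | a) (b | b) h
    · exact G.adj_symm h
    · trivial
    · trivial
    · exact H.adj_symm h⟩
  loopless := ⟨by
    rintro (a | a) h
    · exact G.irrefl h
    · exact H.irrefl h⟩

/-!
A vertex of degree `n - 1` is universal, so `G` has diameter at most two: the distance between
distinct vertices is `1` or `2` according to adjacency. Fix a universal vertex `c` and a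
non-universal vertex `p`. If `p` has a neighbour `q ≠ c` and every neighbour `u ≠ c` of `p` is
told apart from `p` by some third vertex `y ∉ {p, c}` (`y ~ p` or `y ≁ u`), then all vertices
but `p` and `c` form a doubly resolving set, so `ψ(G) ≤ n - 2`. Both adjacent non-universal
vertices and three universal vertices next to a non-universal one supply such `q` and `y`.
Hence, unless `G = K_n`, the non-universal vertices are independent and one or two vertices
are universal: `G` is `K_1 ∨ K̄_{n-1} = K_{1,n-1}` or `K_2 ∨ K̄_{n-2}`.
-/

theorem doublyResolves.symm {V : Type*} {G : SimpleGraph V} {x y u v : V}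
    (h : doublyResolves G x y u v) : doublyResolves G x y v u := by
  unfold doublyResolves at *
  omega

theorem psi_le_card {V : Type*} {G : SimpleGraph V} {W : Finset V}
    (hW : IsDoublyResolvingSet G W) : psi G ≤ W.card :=
  Nat.sInf_le ⟨W, rfl, hW⟩

theorem graphJoin_completeGraph_bot {α β : Type*} [Subsingleton α] :
    graphJoin (completeGraph α) (⊥ : SimpleGraph β) = completeBipartiteGraph α β := by
  ext (a | a) (b | b)
  · simpa [graphJoin] using Subsingleton.elim a b
  all_goals simp [graphJoin]

namespace SimpleGraph

variable {V : Type*} {G : SimpleGraph V}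

theorem Reachable.doublyResolves_self {u v : V} (h : G.Reachable u v) (hne : u ≠ v) :
    doublyResolves G u v u v := by
  have := h.pos_dist_of_ne hne
  unfold doublyResolves
  rw [dist_self, dist_self, dist_comm]
  omega

namespace IsUniversal

variable {c : V}

theorem dist_le_one (hc : G.IsUniversal c) (v : V) : G.dist c v ≤ 1 := by
  by_cases h : c = v
  · simp [h]
  · exact (dist_eq_one_iff_adj.mpr (hc h)).le

theorem dist_le_two (hc : G.IsUniversal c) (u v : V) : G.dist u v ≤ 2 :=
  calc G.dist u v ≤ G.dist u c + G.dist c v := (Connected.of_isUniversal hc).dist_triangle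
    _ ≤ 1 + 1 := add_le_add (dist_comm.trans_le (hc.dist_le_one u)) (hc.dist_le_one v)

theorem dist_eq_two (hc : G.IsUniversal c) {u v : V} (hne : u ≠ v) (h : ¬G.Adj u v) :
    G.dist u v = 2 :=
  (hc.dist_le_two u v).antisymm ((Connected.of_isUniversal hc).one_lt_dist_of_ne_of_not_adj hne h)

theorem doublyResolves_self_left (hc : G.IsUniversal c) {u p y : V} (hup : u ≠ p) (hyu : y ≠ u)
    (hy : G.Adj p u → G.Adj p y ∨ ¬G.Adj u y) : doublyResolves G u y u p := by
  have huy := (Connected.of_isUniversal hc).pos_dist_of_ne hyu.symm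
  have hpy := hc.dist_le_two p y
  unfold doublyResolves
  rw [dist_self]
  by_cases hpu : G.Adj p u
  · rw [dist_eq_one_iff_adj.mpr hpu]
    rcases hy hpu with h | h
    · rw [dist_eq_one_iff_adj.mpr h]
      omega
    · rw [hc.dist_eq_two hyu.symm h]
      omega
  · rw [hc.dist_eq_two hup.symm hpu]
    omega

theorem doublyResolves_center (hc : G.IsUniversal c) {p p₀ q : V} (hp₀ : p ≠ p₀)
    (hpp₀ : ¬G.Adj p p₀) (hp₀c : p₀ ≠ c) (hpq : G.Adj p q) (hqc : q ≠ c) :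
    doublyResolves G p₀ q c p := by
  unfold doublyResolves
  rw [dist_eq_one_iff_adj.mpr (hc hp₀c.symm), hc.dist_eq_two hp₀ hpp₀,
    dist_eq_one_iff_adj.mpr (hc hqc.symm), dist_eq_one_iff_adj.mpr hpq]
  norm_num

theorem isDoublyResolvingSet_compl_pair (hc : G.IsUniversal c) {p q : V}
    (hp : ¬G.IsUniversal p) (hpq : G.Adj p q) (hqc : q ≠ c)
    (hsep : ∀ u, u ≠ p → u ≠ c → G.Adj p u →
      ∃ y, y ≠ p ∧ y ≠ c ∧ y ≠ u ∧ (G.Adj p y ∨ ¬G.Adj u y)) :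
    IsDoublyResolvingSet G ({p, c}ᶜ : Set V) := by
  obtain ⟨p₀, hp₀, hpp₀⟩ : ∃ p₀, p ≠ p₀ ∧ ¬G.Adj p p₀ := by simpa [IsUniversal] using hp
  have hpc : p ≠ c := by rintro rfl; exact hp hc
  have hp₀c : p₀ ≠ c := by rintro rfl; exact hpp₀ (hc hpc.symm).symm
  have hmem : ∀ {x}, x ≠ p → x ≠ c → x ∈ ({p, c}ᶜ : Set V) := by simp_all
  have hother : ∀ u, ∃ y, y ≠ p ∧ y ≠ c ∧ y ≠ u := fun u => by
    by_cases h : q = u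
    · exact ⟨p₀, hp₀.symm, hp₀c, by rintro rfl; exact hpp₀ (h ▸ hpq)⟩
    · exact ⟨q, hpq.ne.symm, hqc, h⟩
  have hresolve : ∀ u v, u ≠ p → u ≠ c → u ≠ v →
      ∃ x ∈ ({p, c}ᶜ : Set V), ∃ y ∈ ({p, c}ᶜ : Set V), doublyResolves G x y u v := by
    intro u v hup huc huv
    by_cases hvp : v = p
    · subst hvp
      by_cases hvu : G.Adj v u
      · obtain ⟨y, hyp, hyc, hyu, hy⟩ := hsep u hup huc hvu
        exact ⟨u, hmem hup huc, y, hmem hyp hyc, hc.doublyResolves_self_left hup hyu fun _ => hy⟩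
      · obtain ⟨y, hyp, hyc, hyu⟩ := hother u
        exact ⟨u, hmem hup huc, y, hmem hyp hyc,
          hc.doublyResolves_self_left hup hyu fun h => absurd h hvu⟩
    by_cases hvc : v = c
    · subst hvc
      obtain ⟨y, hyp, hyc, hyu⟩ := hother u
      exact ⟨u, hmem hup huc, y, hmem hyp hyc,
        hc.doublyResolves_self_left huc hyu fun _ => .inl (hc hyc.symm)⟩
    · exact ⟨u, hmem hup huc, v, hmem hvp hvc,
        (Connected.of_isUniversal hc u v).doublyResolves_self huv⟩
  have hcp : doublyResolves G p₀ q c p := hc.doublyResolves_center hp₀ hpp₀ hp₀c hpq hqc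
  intro u v huv
  by_cases hu : u ≠ p ∧ u ≠ c
  · exact hresolve u v hu.1 hu.2 huv
  by_cases hv : v ≠ p ∧ v ≠ c
  · obtain ⟨x, hx, y, hy, h⟩ := hresolve v u hv.1 hv.2 huv.symm
    exact ⟨x, hx, y, hy, h.symm⟩
  have hq : q ∈ ({p, c}ᶜ : Set V) := hmem hpq.ne.symm hqc
  have hp₀' : p₀ ∈ ({p, c}ᶜ : Set V) := hmem hp₀.symm hp₀c
  obtain ⟨rfl, rfl⟩ | ⟨rfl, rfl⟩ : u = p ∧ v = c ∨ u = c ∧ v = p := by grind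
  · exact ⟨p₀, hp₀', q, hq, hcp.symm⟩
  · exact ⟨p₀, hp₀', q, hq, hcp⟩

end IsUniversal

theorem IsUniversal.psi_lt_card_sub_one [Fintype V] {c : V} (hc : G.IsUniversal c) {p q : V}
    (hp : ¬G.IsUniversal p) (hpq : G.Adj p q) (hqc : q ≠ c)
    (hsep : ∀ u, u ≠ p → u ≠ c → G.Adj p u →
      ∃ y, y ≠ p ∧ y ≠ c ∧ y ≠ u ∧ (G.Adj p y ∨ ¬G.Adj u y)) :
    psi G < Fintype.card V - 1 := by
  classical
  have hpc : p ≠ c := by rintro rfl; exact hp hc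
  have hψ := psi_le_card (G := G) (W := {p, c}ᶜ) (by
    rw [Finset.coe_compl, Finset.coe_pair]
    exact hc.isDoublyResolvingSet_compl_pair hp hpq hqc hsep)
  have hn : ({p, q, c} : Finset V).card ≤ Fintype.card V := Finset.card_le_univ _
  rw [Finset.card_compl, Finset.card_pair hpc] at hψ
  rw [Finset.card_eq_three.mpr ⟨p, q, c, hpq.ne, hpc, hqc, rfl⟩] at hn
  omega

theorem psi_lt_of_adj_of_not_isUniversal [Fintype V] {c : V} (hc : G.IsUniversal c) {p q : V}
    (hp : ¬G.IsUniversal p) (hq : ¬G.IsUniversal q) (hpq : G.Adj p q) :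
    psi G < Fintype.card V - 1 := by
  have hqc : q ≠ c := by rintro rfl; exact hq hc
  refine hc.psi_lt_card_sub_one hp hpq hqc fun u _ huc hpu => ?_
  by_cases huq : u = q
  · subst huq
    obtain ⟨y, huy, hnuy⟩ : ∃ y, u ≠ y ∧ ¬G.Adj u y := by simpa [IsUniversal] using hq
    refine ⟨y, ?_, ?_, Ne.symm huy, .inr hnuy⟩
    · rintro rfl; exact hnuy hpu.symm
    · rintro rfl; exact hnuy (hc huc.symm).symm
  · exact ⟨q, hpq.ne.symm, hqc, Ne.symm huq, .inl hpq⟩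

theorem psi_lt_of_three_isUniversal [Fintype V] {c₁ c₂ c₃ p : V} (h₁ : G.IsUniversal c₁)
    (h₂ : G.IsUniversal c₂) (h₃ : G.IsUniversal c₃) (h₁₂ : c₁ ≠ c₂) (h₁₃ : c₁ ≠ c₃)
    (h₂₃ : c₂ ≠ c₃) (hp : ¬G.IsUniversal p) : psi G < Fintype.card V - 1 := by
  have hadj : ∀ {c}, G.IsUniversal c → G.Adj p c := fun hc =>
    (hc (by rintro rfl; exact hp hc)).symm
  refine h₁.psi_lt_card_sub_one hp (hadj h₂) h₁₂.symm fun u _ _ _ => ?_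
  by_cases hu : u = c₂
  · exact ⟨c₃, (hadj h₃).ne.symm, h₁₃.symm, hu ▸ h₂₃.symm, .inl (hadj h₃)⟩
  · exact ⟨c₂, (hadj h₂).ne.symm, h₁₂.symm, Ne.symm hu, .inl (hadj h₂)⟩

theorem card_isUniversal_le_two [Fintype V] [DecidablePred G.IsUniversal]
    (hψ : psi G = Fintype.card V - 1) {p : V} (hp : ¬G.IsUniversal p) :
    Fintype.card {x // G.IsUniversal x} ≤ 2 := by
  by_contra! h
  obtain ⟨⟨a, ha⟩, ⟨b, hb⟩, ⟨d, hd⟩, hab, had, hbd⟩ := Fintype.two_lt_card_iff.mp h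
  exact (psi_lt_of_three_isUniversal ha hb hd (by simpa using hab) (by simpa using had)
    (by simpa using hbd) hp).ne hψ

theorem exists_isUniversal_of_maxDegree_eq [Fintype V] [DecidableRel G.Adj] [Nonempty V]
    (h : G.maxDegree = Fintype.card V - 1) : ∃ c, G.IsUniversal c := by
  obtain ⟨c, hc⟩ := G.exists_maximal_degree_vertex
  exact ⟨c, (G.degree_eq_card_sub_one c).mp (hc ▸ h)⟩

def Iso.graphJoinCongr {α α' β β' : Type*} {G : SimpleGraph α} {G' : SimpleGraph α'}
    {H : SimpleGraph β} {H' : SimpleGraph β'} (e₁ : G ≃g G') (e₂ : H ≃g H') :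
    graphJoin G H ≃g graphJoin G' H' where
  toEquiv := e₁.toEquiv.sumCongr e₂.toEquiv
  map_rel_iff' {a b} := by
    rcases a with a | a <;> rcases b with b | b <;> simp [graphJoin, Iso.map_adj_iff]

def Iso.bot {α β : Type*} (e : α ≃ β) : (⊥ : SimpleGraph α) ≃g (⊥ : SimpleGraph β) :=
  ⟨e, by simp⟩

def isoGraphJoin (P : V → Prop) [DecidablePred P] (hP : ∀ x, P x → G.IsUniversal x)
    (hnP : ∀ x y, ¬P x → ¬P y → ¬G.Adj x y) :
    G ≃g graphJoin (completeGraph {x // P x}) (⊥ : SimpleGraph {x // ¬P x}) where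
  toEquiv := (Equiv.sumCompl P).symm
  map_rel_iff' {a b} := by
    by_cases ha : P a <;> by_cases hb : P b <;>
      simp only [Equiv.sumCompl_symm_apply_of_pos, Equiv.sumCompl_symm_apply_of_neg, ha, hb,
        not_false_eq_true, graphJoin, top_adj, ne_eq, Subtype.mk.injEq, bot_adj, true_iff,
        false_iff]
    · exact ⟨fun h => hP a ha h, Adj.ne⟩
    · exact hP a ha (by rintro rfl; exact hb ha)
    · exact (hP b hb (by rintro rfl; exact ha hb)).symm
    · exact hnP a b ha hb

theorem nonempty_iso_graphJoin_fin [Fintype V] (P : V → Prop) [DecidablePred P]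
    (hP : ∀ x, P x → G.IsUniversal x) (hnP : ∀ x y, ¬P x → ¬P y → ¬G.Adj x y) {k : ℕ}
    (hk : Fintype.card {x // P x} = k) :
    Nonempty (G ≃g graphJoin (completeGraph (Fin k))
      (⊥ : SimpleGraph (Fin (Fintype.card V - k)))) := by
  have hk' : Fintype.card {x // ¬P x} = Fintype.card V - k := by
    rw [Fintype.card_subtype_compl, hk]
  exact ⟨(isoGraphJoin P hP hnP).trans (Iso.graphJoinCongr
    (Iso.completeGraph (Fintype.equivFinOfCardEq hk)) (Iso.bot (Fintype.equivFinOfCardEq hk')))⟩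

end SimpleGraph

theorem stmt_8_general {V : Type*} [Fintype V] (G : SimpleGraph V) [DecidableRel G.Adj]
    (hpsi : psi G = G.maxDegree) (hdeg : G.maxDegree = Fintype.card V - 1) :
    Nonempty (G ≃g completeGraph (Fin (Fintype.card V))) ∨
    Nonempty (G ≃g completeBipartiteGraph (Fin 1) (Fin (Fintype.card V - 1))) ∨
    Nonempty (G ≃g
      graphJoin (completeGraph (Fin 2)) (⊥ : SimpleGraph (Fin (Fintype.card V - 2)))) := by
  classical
  by_cases hall : ∀ v, G.IsUniversal v
  · obtain rfl := eq_top_iff_forall_isUniversal.mpr hall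
    exact .inl ⟨Iso.completeGraph (Fintype.equivFin V)⟩
  obtain ⟨p, hp⟩ := not_forall.mp hall
  have : Nonempty V := ⟨p⟩
  obtain ⟨c, hc⟩ := exists_isUniversal_of_maxDegree_eq hdeg
  have hψ := hpsi.trans hdeg
  have hind : ∀ x y, ¬G.IsUniversal x → ¬G.IsUniversal y → ¬G.Adj x y :=
    fun x y hx hy hxy => (psi_lt_of_adj_of_not_isUniversal hc hx hy hxy).ne hψ
  have hpos : 0 < Fintype.card {x // G.IsUniversal x} := Fintype.card_pos_iff.mpr ⟨⟨c, hc⟩⟩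
  have hle := card_isUniversal_le_two hψ hp
  obtain h | h : Fintype.card {x // G.IsUniversal x} = 1 ∨
      Fintype.card {x // G.IsUniversal x} = 2 := by omega
  · have hstar := nonempty_iso_graphJoin_fin G.IsUniversal (fun _ => id) hind h
    rw [graphJoin_completeGraph_bot] at hstar
    exact .inr (.inl hstar)
  · exact .inr (.inr (nonempty_iso_graphJoin_fin G.IsUniversal (fun _ => id) hind h))

/-- If `G` is a connected graph of order `n ≥ 3` with maximum degree `Δ` and
`ψ(G) = Δ = n − 1`, then `G` is `K_n`, `K_{1,n−1}`, or `K_2 ∨ K̄_{n−2}`. -/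
theorem stmt_8 {V : Type*} [Fintype V] [DecidableEq V] (G : SimpleGraph V)
    [DecidableRel G.Adj] (hG : G.Connected) (hn : 3 ≤ Fintype.card V)
    (hpsi : psi G = G.maxDegree) (hdeg : G.maxDegree = Fintype.card V - 1) :
    Nonempty (G ≃g completeGraph (Fin (Fintype.card V))) ∨
    Nonempty (G ≃g completeBipartiteGraph (Fin 1) (Fin (Fintype.card V - 1))) ∨
    Nonempty (G ≃g
      graphJoin (completeGraph (Fin 2)) (⊥ : SimpleGraph (Fin (Fintype.card V - 2)))) :=
  stmt_8_general G hpsi hdeg
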